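/- Let 𝒜 be the algebra of functions on ℝ^s × (0,∞) generated by functions of the form J_f(ℓ, r) = r^{−(d−s−2)} ∫_{ℝ^{d−s−2}} f(ℓ₁,…,ℓ_s, r, v_{s+2},…,v_{d−1}, v_d) dv_{s+2}…dv_{d−1}, where f ranges over continuous compactly supported functions on the open half-space {v ∈ ℝ^d : v_{s+1} > 0} and v_d = (a − Q₀(ℓ₁,…,ℓ_s,0,v_{s+2},…,v_{d−1},0))/(2r). Then 𝒜 is dense in C_c(ℝ^s × (0,∞)) in the uniform norm. -/
import Mathlib


open MeasureTheory

/-- The vector `(ℓ₁,…,ℓ_s, r, v_{s+2},…,v_{d−1}, v_d)` built from `ℓ`, `r`, the integration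
variables `y` and the last coordinate `vd`. -/
def vecBuild (d s : ℕ) (ℓ : Fin s → ℝ) (r : ℝ) (y : Fin (d - s - 2) → ℝ) (vd : ℝ) :
    Fin d → ℝ := fun i =>
  if h1 : (i : ℕ) < s then ℓ ⟨i, h1⟩
  else if h2 : (i : ℕ) = s then r
  else if h3 : (i : ℕ) = d - 1 then vd
  else y ⟨(i : ℕ) - (s + 1), by have := i.2; omega⟩

/-- The last coordinate `v_d = (a − Q₀(ℓ,0,y,0))/(2r)`, where
`Q₀(v) = Q_{1,…,s}(v) + 2 v_{s+1} v_d + Σ_{i=s+2}^{s+r₁} v_i² − Σ_{i=s+r₁+1}^{d−1} v_i²`. -/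
noncomputable def vdVal (d s r₁ : ℕ) (a : ℝ) (Qs : (Fin s → ℝ) → ℝ)
    (ℓ : Fin s → ℝ) (r : ℝ) (y : Fin (d - s - 2) → ℝ) : ℝ :=
  (a - Qs ℓ - ∑ j : Fin (d - s - 2),
      (if (j : ℕ) < r₁ - 1 then (1 : ℝ) else -1) * (y j) ^ 2) / (2 * r)

/-- The function `J_f(ℓ, r) = r^{−(d−s−2)} ∫_{ℝ^{d−s−2}} f(ℓ, r, y, v_d) dy`. -/
noncomputable def Jfun (d s r₁ : ℕ) (a : ℝ) (Qs : (Fin s → ℝ) → ℝ)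
    (f : (Fin d → ℝ) → ℝ) (ℓ : Fin s → ℝ) (r : ℝ) : ℝ :=
  (∫ y : Fin (d - s - 2) → ℝ,
    f (vecBuild d s ℓ r y (vdVal d s r₁ a Qs ℓ r y))) / r ^ (d - s - 2)

lemma vecBuild_lt (d s : ℕ) (ℓ : Fin s → ℝ) (r : ℝ) (y : Fin (d - s - 2) → ℝ) (vd : ℝ)
    (i : Fin d) (hi : (i : ℕ) < s) : vecBuild d s ℓ r y vd i = ℓ ⟨i, hi⟩ := by
  simp [vecBuild, hi]

lemma vecBuild_eq_s (d s : ℕ) (ℓ : Fin s → ℝ) (r : ℝ) (y : Fin (d - s - 2) → ℝ) (vd : ℝ)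
    (i : Fin d) (hi : (i : ℕ) = s) : vecBuild d s ℓ r y vd i = r := by
  simp [vecBuild, hi]

lemma vecBuild_mid (d s : ℕ) (ℓ : Fin s → ℝ) (r : ℝ) (y : Fin (d - s - 2) → ℝ) (vd : ℝ)
    (i : Fin d) (h1 : s < (i : ℕ)) (h2 : (i : ℕ) < d - 1) :
    vecBuild d s ℓ r y vd i = y ⟨(i : ℕ) - (s + 1), by have := i.2; omega⟩ := by
  have hns : ¬ ((i : ℕ) < s) := by omega
  have hne : ¬ ((i : ℕ) = s) := by omega
  have hnd : ¬ ((i : ℕ) = d - 1) := by omega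
  simp [vecBuild, hns, hne, hnd]

lemma vecBuild_last (d s : ℕ) (hsd : s < d) (ℓ : Fin s → ℝ) (r : ℝ)
    (y : Fin (d - s - 2) → ℝ) (vd : ℝ)
    (i : Fin d) (h1 : (i : ℕ) = d - 1) (h2 : s ≠ d - 1) :
    vecBuild d s ℓ r y vd i = vd := by
  simp [vecBuild, h1, show ¬ (d - 1 < s) by omega, show ¬ (d - 1 = s) by omega]

lemma sum_sign_sq_bound (k r₁ : ℕ) (y : Fin k → ℝ) (hy : ‖y‖ ≤ 2) :
    |∑ j : Fin k, (if (j : ℕ) < r₁ - 1 then (1 : ℝ) else -1) * (y j) ^ 2| ≤ 4 * k := by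
  refine le_trans (Finset.abs_sum_le_sum_abs _ _) ?_
  have hterm : ∀ j : Fin k, |(if (j : ℕ) < r₁ - 1 then (1 : ℝ) else -1) * (y j) ^ 2| ≤ 4 := by
    intro j
    have h1 : |y j| ≤ 2 := le_trans (norm_le_pi_norm y j) hy
    have h2 : (y j) ^ 2 ≤ 4 := by nlinarith [abs_nonneg (y j), sq_abs (y j)]
    rw [abs_mul]
    have h3 : |(if (j : ℕ) < r₁ - 1 then (1 : ℝ) else -1)| = 1 := by split_ifs <;> simp
    rw [h3, one_mul, abs_of_nonneg (sq_nonneg _)]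
    exact h2
  calc ∑ j : Fin k, |(if (j : ℕ) < r₁ - 1 then (1 : ℝ) else -1) * (y j) ^ 2|
      ≤ ∑ _j : Fin k, (4 : ℝ) := Finset.sum_le_sum fun j _ => hterm j
    _ = 4 * k := by simp [mul_comm]

lemma vd_quotient_bound (aa q S C N δ r : ℝ) (hq : |q| ≤ C) (hS : |S| ≤ N) (hN : 0 ≤ N)
    (hδ : 0 < δ) (hr : δ ≤ r) :
    |(aa - q - S) / (2 * r)| ≤ (|aa| + C + N) / (2 * δ) := by
  rw [abs_div, abs_of_pos (by linarith : (0:ℝ) < 2 * r)]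
  have hnum : |aa - q - S| ≤ |aa| + C + N := by
    calc |aa - q - S| ≤ |aa - q| + |S| := abs_sub _ _
      _ ≤ (|aa| + |q|) + N := add_le_add (abs_sub _ _) hS
      _ ≤ |aa| + C + N := by linarith
  have hC0 : 0 ≤ C := le_trans (abs_nonneg q) hq
  apply div_le_div₀ (by linarith [abs_nonneg aa]) hnum (by linarith) (by linarith)

lemma quadraticForm_continuous (s : ℕ) (Qs : QuadraticForm ℝ (Fin s → ℝ)) :
    Continuous ⇑Qs := by
  have h1 : ∀ x, (QuadraticMap.associatedHom ℝ Qs) x x = Qs x :=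
    QuadraticMap.associated_eq_self_apply ℝ Qs
  set B := QuadraticMap.associatedHom ℝ Qs
  set B2 : (Fin s → ℝ) →ₗ[ℝ] ((Fin s → ℝ) →L[ℝ] ℝ) :=
    (LinearMap.toContinuousLinearMap : ((Fin s → ℝ) →ₗ[ℝ] ℝ) ≃ₗ[ℝ] _).toLinearMap ∘ₗ B
  have hB2 : Continuous B2 := B2.continuous_of_finiteDimensional
  have hc : Continuous fun x => (B2 x) x :=
    isBoundedBilinearMap_apply.continuous.comp (hB2.prodMk continuous_id)
  convert hc using 1
  funext x
  rw [← h1 x]; rfl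


set_option maxHeartbeats 1000000 in
/-- the algebra generated by the functions `J_f`, for `f` continuous and
compactly supported in the open half-space `{v : v_{s+1} > 0}`, is dense in
`C_c(ℝ^s × (0,∞))` for the uniform norm. -/
theorem stmt13 (d s r₁ : ℕ) (hds : 2 * s < d) (hsd : s < d)
    (a : ℝ) (Qs : QuadraticForm ℝ (Fin s → ℝ))
    (hQnd : ∀ x, (∀ y, QuadraticMap.polar (⇑Qs) x y = 0) → x = 0)
    (g : (Fin s → ℝ) × {r : ℝ // 0 < r} → ℝ)
    (hgcont : Continuous g) (hgcpt : HasCompactSupport g)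
    (ε : ℝ) (hε : 0 < ε) :
    ∃ F ∈ NonUnitalAlgebra.adjoin ℝ
        {F : (Fin s → ℝ) × {r : ℝ // 0 < r} → ℝ |
          ∃ f : (Fin d → ℝ) → ℝ, Continuous f ∧ HasCompactSupport f ∧
            tsupport f ⊆ {v : Fin d → ℝ | 0 < v ⟨s, hsd⟩} ∧
            F = fun p => Jfun d s r₁ a (⇑Qs) f p.1 (p.2 : ℝ)},
      ∀ p, |g p - F p| < ε := by
  classical
  by_cases hg : g = 0
  · refine ⟨0, zero_mem _, fun p => by simp [hg, hε]⟩
  have hd1 : d - 1 < d := by omega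
  have hKc : IsCompact (tsupport g) := hgcpt
  have hKne : (tsupport g).Nonempty := by
    rcases Function.ne_iff.mp hg with ⟨p, hp⟩
    exact ⟨p, subset_tsupport g (by simpa using hp)⟩
  obtain ⟨p₀, hp₀K, hp₀min⟩ := hKc.exists_isMinOn hKne
    ((continuous_subtype_val.comp continuous_snd).continuousOn)
  set δ : ℝ := (p₀.2 : ℝ) with hδdef
  have hδ : 0 < δ := p₀.2.2
  have hδmin : ∀ p ∈ tsupport g, δ ≤ (p.2 : ℝ) := fun p hp => hp₀min hp
  obtain ⟨p₁, hp₁K, hp₁max⟩ := hKc.exists_isMaxOn hKne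
    ((continuous_subtype_val.comp continuous_snd).continuousOn)
  set R : ℝ := (p₁.2 : ℝ) with hRdef
  have hRmax : ∀ p ∈ tsupport g, (p.2 : ℝ) ≤ R := fun p hp => hp₁max hp
  have hQc : Continuous ⇑Qs := quadraticForm_continuous s Qs
  obtain ⟨C, hC⟩ := (hKc.image continuous_fst).exists_bound_of_continuousOn hQc.continuousOn
  have hC' : ∀ p ∈ tsupport g, ‖Qs p.1‖ ≤ C := fun p hp => hC p.1 ⟨p, hp, rfl⟩
  obtain ⟨B1, hB1⟩ := (hKc.image continuous_fst).isBounded.subset_closedBall 0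
  have hB1' : ∀ p ∈ tsupport g, ‖p.1‖ ≤ B1 := by
    intro p hp
    have := hB1 ⟨p, hp, rfl⟩
    simpa [Metric.mem_closedBall, dist_zero_right] using this
  set M : ℝ := max (max 0 R) ((|a| + C + 4 * (d - s - 2 : ℕ)) / (2 * δ)) with hMdef
  have hM0 : 0 ≤ M := le_trans (le_max_left 0 R) (le_max_left _ _)
  set bη : ContDiffBump (0 : ℝ) := ⟨M + 1, M + 2, by linarith, by linarith⟩ with hbη
  set bχ : ContDiffBump (0 : Fin (d - s - 2) → ℝ) := ⟨1, 2, one_pos, one_lt_two⟩ with hbχ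
  set χ : (Fin (d - s - 2) → ℝ) → ℝ := bχ.normed volume with hχdef
  set h : (Fin s → ℝ) × {r : ℝ // 0 < r} → ℝ :=
    fun p => g p * (p.2 : ℝ) ^ (d - s - 2) with hhdef
  have hhc : Continuous h :=
    hgcont.mul ((continuous_subtype_val.comp continuous_snd).pow _)
  have hhsupp : ∀ p, h p ≠ 0 → p ∈ tsupport g := by
    intro p hp
    apply subset_tsupport g
    intro h0
    exact hp (by simp [hhdef, h0])
  set T : (Fin s → ℝ) × ℝ → (Fin s → ℝ) × {r : ℝ // 0 < r} :=
    fun q => (q.1, ⟨max q.2 (δ / 2), lt_max_of_lt_right (half_pos hδ)⟩) with hTdef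
  have hTc : Continuous T :=
    continuous_fst.prodMk ((continuous_snd.max continuous_const).subtype_mk _)
  set φ : (Fin s → ℝ) × ℝ → ℝ := fun q => h (T q) with hφdef
  have hφc : Continuous φ := hhc.comp hTc
  have hφe : ∀ p : (Fin s → ℝ) × {r : ℝ // 0 < r}, φ (p.1, (p.2 : ℝ)) = h p := by
    intro p
    by_cases hp : h p = 0
    · rw [hp]
      by_cases hc2 : δ / 2 ≤ (p.2 : ℝ)
      · have hTp : T (p.1, (p.2 : ℝ)) = p := by
          simp only [hTdef]
          refine Prod.ext rfl (Subtype.ext ?_)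
          simpa using max_eq_left hc2
        simp [hφdef, hTp, hp]
      · push_neg at hc2
        have hTq : ((T (p.1, (p.2 : ℝ))).2 : ℝ) = δ / 2 := by
          simp only [hTdef]
          simpa using max_eq_right hc2.le
        by_contra hne
        have hmem := hhsupp _ hne
        have := hδmin _ hmem
        rw [hTq] at this
        linarith
    · have hmem := hhsupp p hp
      have hrδ : δ ≤ (p.2 : ℝ) := hδmin p hmem
      have hTp : T (p.1, (p.2 : ℝ)) = p := by
        simp only [hTdef]
        refine Prod.ext rfl (Subtype.ext ?_)
        simpa using max_eq_left (le_trans (by linarith) hrδ)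
      simp [hφdef, hTp]
  have hφδ : ∀ q, φ q ≠ 0 → δ ≤ q.2 := by
    intro q hq
    have hmem := hhsupp _ hq
    have h1 : δ ≤ max q.2 (δ / 2) := hδmin _ hmem
    rcases max_cases q.2 (δ / 2) with ⟨he, _⟩ | ⟨he, _⟩
    · rwa [he] at h1
    · rw [he] at h1; linarith
  have hφR : ∀ q, φ q ≠ 0 → q.2 ≤ R := by
    intro q hq
    exact le_trans (le_max_left _ _) (hRmax _ (hhsupp _ hq))
  have hφQ : ∀ q, φ q ≠ 0 → ‖Qs q.1‖ ≤ C := fun q hq => hC' _ (hhsupp _ hq)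
  have hφB : ∀ q, φ q ≠ 0 → ‖q.1‖ ≤ B1 := fun q hq => hB1' _ (hhsupp _ hq)
  set f : (Fin d → ℝ) → ℝ := fun v =>
    φ (fun i : Fin s => v ⟨i, i.2.trans hsd⟩, v ⟨s, hsd⟩) *
      (χ (fun j : Fin (d - s - 2) => v ⟨s + 1 + j, by have := j.2; omega⟩) *
        bη (v ⟨d - 1, hd1⟩)) with hfdef
  have hfc : Continuous f := by
    apply Continuous.mul
    · exact hφc.comp ((continuous_pi fun i => continuous_apply _).prodMk (continuous_apply _))
    · exact ((bχ.continuous_normed).comp (continuous_pi fun j => continuous_apply _)).mul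
        (bη.continuous.comp (continuous_apply _))
  have hfeval : ∀ (ℓ : Fin s → ℝ) (r : ℝ) (y : Fin (d - s - 2) → ℝ) (vd : ℝ),
      f (vecBuild d s ℓ r y vd) =
        φ (ℓ, r) * (χ y * bη (if d - 1 = s then r else vd)) := by
    intro ℓ r y vd
    have e1 : (fun i : Fin s => vecBuild d s ℓ r y vd ⟨i, i.2.trans hsd⟩) = ℓ := by
      funext i
      exact vecBuild_lt d s ℓ r y vd ⟨i, i.2.trans hsd⟩ i.2
    have e2 : vecBuild d s ℓ r y vd ⟨s, hsd⟩ = r :=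
      vecBuild_eq_s d s ℓ r y vd ⟨s, hsd⟩ rfl
    have e3 : (fun j : Fin (d - s - 2) =>
        vecBuild d s ℓ r y vd ⟨s + 1 + j, by have := j.2; omega⟩) = y := by
      funext j
      have hj := j.2
      rw [vecBuild_mid d s ℓ r y vd ⟨s + 1 + j, by omega⟩
        (show s < s + 1 + (j : ℕ) by omega) (show s + 1 + (j : ℕ) < d - 1 by omega)]
      exact congrArg y (Fin.ext (show s + 1 + (j : ℕ) - (s + 1) = (j : ℕ) by omega))
    have e4 : vecBuild d s ℓ r y vd ⟨d - 1, hd1⟩ = if d - 1 = s then r else vd := by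
      by_cases hds' : d - 1 = s
      · rw [if_pos hds']
        exact vecBuild_eq_s d s ℓ r y vd ⟨d - 1, hd1⟩ hds'
      · rw [if_neg hds']
        exact vecBuild_last d s hsd ℓ r y vd ⟨d - 1, hd1⟩ rfl (fun hh => hds' hh.symm)
    simp only [hfdef, e1, e2, e3, e4]
  set B : ℝ := max (max B1 R) (max 2 (M + 2)) with hBdef
  have hB0 : (0 : ℝ) ≤ B :=
    le_trans (by norm_num) (le_trans (le_max_left 2 (M + 2)) (le_max_right _ _))
  have hfsub : Function.support f ⊆ Metric.closedBall 0 B := by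
    intro v hv
    simp only [Function.mem_support, hfdef] at hv
    have hφ0 : φ (fun i : Fin s => v ⟨i, i.2.trans hsd⟩, v ⟨s, hsd⟩) ≠ 0 :=
      fun h0 => hv (by rw [h0]; ring)
    have hχ0 : χ (fun j : Fin (d - s - 2) => v ⟨s + 1 + j, by have := j.2; omega⟩) ≠ 0 :=
      fun h0 => hv (by rw [h0]; ring)
    have hη0 : bη (v ⟨d - 1, hd1⟩) ≠ 0 := fun h0 => hv (by rw [h0]; ring)
    rw [Metric.mem_closedBall, dist_zero_right]
    rw [pi_norm_le_iff_of_nonneg hB0]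
    intro i
    have hi := i.2
    rcases show (i : ℕ) < s ∨ (i : ℕ) = s ∨ (s < (i : ℕ) ∧ (i : ℕ) < d - 1) ∨ (i : ℕ) = d - 1
        by omega with hcase | hcase | hcase | hcase
    · have hb := hφB _ hφ0
      have h2 : v i = (fun i' : Fin s => v ⟨i', i'.2.trans hsd⟩) ⟨(i : ℕ), hcase⟩ := rfl
      rw [h2]
      exact le_trans (le_trans
        (norm_le_pi_norm (fun i' : Fin s => v ⟨i', i'.2.trans hsd⟩) ⟨(i : ℕ), hcase⟩) hb)
        (le_trans (le_max_left B1 R) (le_max_left _ _))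
    · have heq : i = ⟨s, hsd⟩ := Fin.ext hcase
      have h1 : δ ≤ v ⟨s, hsd⟩ := hφδ _ hφ0
      have h2 : v ⟨s, hsd⟩ ≤ R := hφR _ hφ0
      rw [heq, Real.norm_eq_abs, abs_le]
      have hRB : R ≤ B := le_trans (le_max_right B1 R) (le_max_left _ _)
      constructor
      · linarith
      · linarith
    · have hy : (fun j : Fin (d - s - 2) => v ⟨s + 1 + j, by have := j.2; omega⟩) ∈
          tsupport χ := subset_tsupport _ hχ0
      rw [hχdef, bχ.tsupport_normed_eq] at hy
      have hyn : ‖(fun j : Fin (d - s - 2) => v ⟨s + 1 + j, by have := j.2; omega⟩)‖ ≤ 2 := by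
        simpa [dist_zero_right] using hy
      have h2 : v i = (fun j : Fin (d - s - 2) => v ⟨s + 1 + j, by have := j.2; omega⟩)
          ⟨(i : ℕ) - (s + 1), by omega⟩ := by
        refine (congrArg v (Fin.ext ?_)).symm
        show s + 1 + ((i : ℕ) - (s + 1)) = (i : ℕ)
        omega
      rw [h2]
      refine le_trans (le_trans (norm_le_pi_norm
        (fun j : Fin (d - s - 2) => v ⟨s + 1 + j, by have := j.2; omega⟩)
        ⟨(i : ℕ) - (s + 1), by omega⟩) hyn) ?_
      exact le_trans (le_max_left 2 (M + 2)) (le_max_right _ _)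
    · have heq : i = ⟨d - 1, hd1⟩ := Fin.ext hcase
      have hmem : v ⟨d - 1, hd1⟩ ∈ Function.support bη := hη0
      rw [bη.support_eq] at hmem
      have hb : ‖v ⟨d - 1, hd1⟩‖ ≤ M + 2 := by
        have := Metric.mem_ball.mp hmem
        rw [dist_zero_right] at this
        simpa [hbη] using this.le
      rw [heq]
      exact le_trans hb (le_trans (le_max_right 2 (M + 2)) (le_max_right _ _))
  have hfcs : HasCompactSupport f := by
    apply HasCompactSupport.intro (isCompact_closedBall (0 : Fin d → ℝ) B)
    intro v hv
    by_contra hne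
    exact hv (hfsub hne)
  have hfpos : tsupport f ⊆ {v : Fin d → ℝ | 0 < v ⟨s, hsd⟩} := by
    have h1 : Function.support f ⊆ {v : Fin d → ℝ | δ ≤ v ⟨s, hsd⟩} := by
      intro v hv
      simp only [Function.mem_support, hfdef] at hv
      have hφ0 : φ (fun i : Fin s => v ⟨i, i.2.trans hsd⟩, v ⟨s, hsd⟩) ≠ 0 :=
        fun h0 => hv (by rw [h0]; ring)
      exact hφδ _ hφ0
    have h2 : IsClosed {v : Fin d → ℝ | δ ≤ v ⟨s, hsd⟩} :=
      isClosed_le continuous_const (continuous_apply _)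
    refine le_trans (closure_minimal h1 h2) ?_
    intro v hv
    exact lt_of_lt_of_le hδ hv
  have hmain : ∀ p : (Fin s → ℝ) × {r : ℝ // 0 < r},
      Jfun d s r₁ a (⇑Qs) f p.1 (p.2 : ℝ) = g p := by
    intro p
    have hr : 0 < (p.2 : ℝ) := p.2.2
    rw [Jfun]
    by_cases hgp : g p = 0
    · have hφ0 : φ (p.1, (p.2 : ℝ)) = 0 := by rw [hφe p, hhdef]; simp [hgp]
      have hzero : ∀ y : Fin (d - s - 2) → ℝ,
          f (vecBuild d s p.1 (p.2 : ℝ) y (vdVal d s r₁ a (⇑Qs) p.1 (p.2 : ℝ) y)) = 0 := by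
        intro y
        rw [hfeval, hφ0, zero_mul]
      rw [hgp]
      simp only [hzero, integral_zero, zero_div]
    · have hpK : p ∈ tsupport g := subset_tsupport g (by simpa using hgp)
      have hrδ : δ ≤ (p.2 : ℝ) := hδmin p hpK
      have hrR : (p.2 : ℝ) ≤ R := hRmax p hpK
      have hQp : ‖Qs p.1‖ ≤ C := hC' p hpK
      have hcut : ∀ y : Fin (d - s - 2) → ℝ,
          χ y * bη (if d - 1 = s then (p.2 : ℝ)
            else vdVal d s r₁ a (⇑Qs) p.1 (p.2 : ℝ) y) = χ y := by
        intro y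
        by_cases hχy : χ y = 0
        · rw [hχy, zero_mul]
        have hymem : y ∈ tsupport χ := subset_tsupport _ hχy
        rw [hχdef, bχ.tsupport_normed_eq] at hymem
        have hyn : ‖y‖ ≤ 2 := by simpa [dist_zero_right] using hymem
        have hw : |if d - 1 = s then (p.2 : ℝ)
            else vdVal d s r₁ a (⇑Qs) p.1 (p.2 : ℝ) y| ≤ M := by
          split_ifs with hds'
          · rw [abs_of_pos hr]
            exact le_trans hrR (le_trans (le_max_right 0 R) (le_max_left _ _))
          · rw [vdVal]
            refine le_trans (vd_quotient_bound a (Qs p.1) _ C (4 * (d - s - 2 : ℕ)) δ (p.2 : ℝ)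
              (by rwa [Real.norm_eq_abs] at hQp)
              (sum_sign_sq_bound (d - s - 2) r₁ y hyn) (by positivity) hδ hrδ) ?_
            exact le_max_right (max 0 R) _
        have hone : bη (if d - 1 = s then (p.2 : ℝ)
            else vdVal d s r₁ a (⇑Qs) p.1 (p.2 : ℝ) y) = 1 := by
          apply bη.one_of_mem_closedBall
          rw [Metric.mem_closedBall, dist_zero_right, Real.norm_eq_abs]
          have : (M : ℝ) ≤ M + 1 := by linarith
          calc |if d - 1 = s then (p.2 : ℝ)
              else vdVal d s r₁ a (⇑Qs) p.1 (p.2 : ℝ) y| ≤ M := hw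
            _ ≤ M + 1 := this
        rw [hone, mul_one]
      have hintegrand : ∀ y : Fin (d - s - 2) → ℝ,
          f (vecBuild d s p.1 (p.2 : ℝ) y (vdVal d s r₁ a (⇑Qs) p.1 (p.2 : ℝ) y)) =
            φ (p.1, (p.2 : ℝ)) * χ y := by
        intro y
        rw [hfeval, hcut]
      simp only [hintegrand]
      rw [MeasureTheory.integral_const_mul, hχdef, bχ.integral_normed, mul_one, hφe p, hhdef]
      simp only []
      rw [mul_div_assoc, div_self (pow_ne_zero _ hr.ne'), mul_one]
  refine ⟨fun p => Jfun d s r₁ a (⇑Qs) f p.1 (p.2 : ℝ),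
    NonUnitalAlgebra.subset_adjoin ℝ ⟨f, hfc, hfcs, hfpos, rfl⟩, ?_⟩
  intro p
  simp only [hmain p, sub_self, abs_zero]
  exact hε
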